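/- arXiv:2308.05827 — 4 statements merged into one kernel-verified Lean document; each statement's English description precedes it below -/
import Mathlib

section
/- Let A be an N × L real matrix of the block form with first L−1 rows (1_{L−1} | 0), L-th row (0,…,0,1), and remaining rows (U | V), and let A' be the N × (L−1) matrix with first L−1 rows 1_{L−1}, L-th row 0, and remaining rows U. Then the sum of the squares of all (L−1) × (L−1) minors of A' is at most the sum of the squares of all L × L minors of A, with equality if and only if V = 0. -/
/-!
The `L`-th row of `A` is the last unit vector, and the `L`-th row of `A'` is zero. Split the
`L × L` minors of `A` according to whether their row set contains row `L`. Laplace expansion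
along that row turns those that do into exactly the `(L-1) × (L-1)` minors of `A'` on row sets
avoiding row `L`, and these are all the nonzero minors of `A'`. The remaining minors of `A`
contribute a sum of squares, which vanishes when `V = 0` because their last column is then zero;
conversely the minor on the rows `1, …, L-1, L+1+m` equals `V m`.
-/

open Matrix

/-- The sum of the squares of all maximal (`L × L`) minors of an `N × L` real matrix:
for each `L`-element set of rows (enumerated in increasing order) take the square of the
determinant of the corresponding square submatrix, and sum over all such sets.  This is
the squared Euclidean norm of the vector of Grassmann (Plücker) coordinates. -/
noncomputable def minorSum {N L : ℕ} (A : Matrix (Fin N) (Fin L) ℝ) : ℝ :=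
  ∑ I ∈ (Finset.univ.powersetCard L : Finset (Finset (Fin N))).attach,
    (Matrix.det (fun a b : Fin L =>
      A (I.1.orderIsoOfFin (Finset.mem_powersetCard.mp I.2).2 a) b)) ^ 2

namespace Matrix

section Determinant

variable {R : Type*} [CommRing R]

lemma sq_det_submatrix_eq_of_range_eq {ι n : Type*} [Fintype n] [DecidableEq n]
    (A : Matrix ι n R) {f g : n → ι} (hf : f.Injective) (hg : g.Injective)
    (h : Set.range f = Set.range g) :
    (A.submatrix f id).det ^ 2 = (A.submatrix g id).det ^ 2 := by
  let σ : Equiv.Perm n :=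
    (Equiv.ofInjective f hf).trans ((Equiv.setCongr h).trans (Equiv.ofInjective g hg).symm)
  have hσ : g ∘ σ = f := funext fun i => by simp [σ, Equiv.apply_ofInjective_symm]
  rw [← hσ]
  change ((A.submatrix g id).submatrix σ id).det ^ 2 = _
  rw [det_permute, mul_pow, ← Int.cast_pow, ← Units.val_pow_eq_pow_val, Int.units_sq]
  simp

lemma det_eq_mul_det_submatrix_castSucc {n : ℕ} (M : Matrix (Fin (n + 1)) (Fin (n + 1)) R)
    {c : R} (hM : M (Fin.last n) = Pi.single (Fin.last n) c) :
    M.det = c * (M.submatrix Fin.castSucc Fin.castSucc).det := by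
  rw [det_succ_row M (Fin.last n), Finset.sum_eq_single (Fin.last n)]
  · simp [hM, ← two_mul, pow_mul]
  · intro j _ hj
    simp [hM, hj]
  · simp

end Determinant

section SqMinor

variable {N m : ℕ}

noncomputable def sqMinor (A : Matrix (Fin N) (Fin m) ℝ) (S : Finset (Fin N)) : ℝ :=
  if h : S.card = m then (A.submatrix (S.orderEmbOfFin h) id).det ^ 2 else 0

lemma sqMinor_nonneg (A : Matrix (Fin N) (Fin m) ℝ) (S : Finset (Fin N)) :
    0 ≤ sqMinor A S := by
  unfold sqMinor; split <;> positivity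

lemma minorSum_eq_sum_sqMinor (A : Matrix (Fin N) (Fin m) ℝ) :
    minorSum A = ∑ S ∈ Finset.univ.powersetCard m, sqMinor A S := by
  rw [minorSum, ← Finset.sum_attach _ (sqMinor A)]
  refine Finset.sum_congr rfl fun S _ => ?_
  rw [sqMinor, dif_pos (Finset.mem_powersetCard.mp S.2).2]
  rfl

lemma sqMinor_eq_sq_det (A : Matrix (Fin N) (Fin m) ℝ) {S : Finset (Fin N)}
    {f : Fin m → Fin N} (hf : f.Injective) (hS : Set.range f = S) :
    sqMinor A S = (A.submatrix f id).det ^ 2 := by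
  have hcard : S.card = m := by
    have himage : Finset.univ.image f = S := Finset.coe_injective (by simp [hS])
    rw [← himage, Finset.card_image_of_injective _ hf, Finset.card_fin]
  rw [sqMinor, dif_pos hcard]
  exact sq_det_submatrix_eq_of_range_eq A (S.orderEmbOfFin hcard).injective hf (by simp [hS])

lemma sqMinor_eq_zero_of_row_eq_zero {A : Matrix (Fin N) (Fin m) ℝ} {S : Finset (Fin N)}
    {k : Fin N} (hk : A k = 0) (hkS : k ∈ S) : sqMinor A S = 0 := by
  rw [sqMinor]
  split_ifs with hS
  · obtain ⟨i, rfl⟩ : k ∈ Set.range (S.orderEmbOfFin hS) := by simpa using hkS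
    rw [det_eq_zero_of_row_eq_zero i fun j => by simp [hk]]
    simp
  · rfl

lemma sqMinor_eq_zero_of_col_eq_zero {A : Matrix (Fin N) (Fin m) ℝ} {S : Finset (Fin N)}
    (j : Fin m) (hj : ∀ i ∈ S, A i j = 0) : sqMinor A S = 0 := by
  rw [sqMinor]
  split_ifs with hS
  · rw [det_eq_zero_of_column_eq_zero (A := A.submatrix _ id) j
      fun i => hj _ (S.orderEmbOfFin_mem hS i)]
    simp
  · rfl

end SqMinor

section LastColumn

variable {N n : ℕ} {A : Matrix (Fin N) (Fin (n + 1)) ℝ} {k : Fin N}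

lemma sqMinor_insert_eq_sqMinor_submatrix_castSucc (hk : A k = Pi.single (Fin.last n) 1)
    {S : Finset (Fin N)} (hkS : k ∉ S) (hS : S.card = n) :
    sqMinor A (insert k S) = sqMinor (A.submatrix id Fin.castSucc) S := by
  have hf : (Fin.snoc (S.orderEmbOfFin hS) k : Fin (n + 1) → Fin N).Injective :=
    Fin.snoc_injective_of_injective (S.orderEmbOfFin hS).injective (by simpa using hkS)
  rw [sqMinor_eq_sq_det A hf (by simp), sqMinor, dif_pos hS,
    det_eq_mul_det_submatrix_castSucc _ (c := 1) (by ext; simp [hk]), one_mul]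
  congr 2
  ext i j
  simp

theorem minorSum_eq_add_of_row_eq_single (hk : A k = Pi.single (Fin.last n) 1) :
    minorSum A = minorSum (A.submatrix id Fin.castSucc) +
      ∑ I ∈ Finset.univ.powersetCard (n + 1) with k ∉ I, sqMinor A I := by
  have hk' : A.submatrix id Fin.castSucc k = 0 := by
    ext j; simp [hk, Fin.castSucc_ne_last]
  rw [minorSum_eq_sum_sqMinor, minorSum_eq_sum_sqMinor,
    ← Finset.sum_filter_add_sum_filter_not _ (k ∈ ·),
    ← Finset.sum_filter_of_ne (p := (k ∉ ·)) fun S _ h hkS =>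
      h (sqMinor_eq_zero_of_row_eq_zero hk' hkS)]
  congr 1
  refine (Finset.sum_nbij' (insert k) (·.erase k) ?_ ?_ ?_ ?_ ?_).symm
  · intro S hS
    simp only [Finset.mem_filter, Finset.mem_powersetCard_univ] at hS ⊢
    exact ⟨by rw [Finset.card_insert_of_notMem hS.2, hS.1], Finset.mem_insert_self k S⟩
  · intro I hI
    simp only [Finset.mem_filter, Finset.mem_powersetCard_univ] at hI ⊢
    exact ⟨by rw [Finset.card_erase_of_mem hI.2, hI.1]; rfl, Finset.notMem_erase k I⟩
  · intro S hS
    exact Finset.erase_insert (Finset.mem_filter.mp hS).2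
  · intro I hI
    exact Finset.insert_erase (Finset.mem_filter.mp hI).2
  · intro S hS
    simp only [Finset.mem_filter, Finset.mem_powersetCard_univ] at hS
    exact (sqMinor_insert_eq_sqMinor_submatrix_castSucc hk hS.2 hS.1).symm

lemma sum_sqMinor_not_mem_eq_zero_of_col_eq_zero (hcol : ∀ i ≠ k, A i (Fin.last n) = 0) :
    ∑ I ∈ Finset.univ.powersetCard (n + 1) with k ∉ I, sqMinor A I = 0 :=
  Finset.sum_eq_zero fun _ hI => sqMinor_eq_zero_of_col_eq_zero (Fin.last n)
    fun i hi => hcol i (ne_of_mem_of_not_mem hi (Finset.mem_filter.mp hI).2)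

lemma sqMinor_insert_image_eq_sq {e : Fin n → Fin N}
    (he : ∀ j, A (e j) = Pi.single j.castSucc 1) {r : Fin N} (hr : r ∉ Set.range e) :
    sqMinor A (insert r (Finset.univ.image e)) = A r (Fin.last n) ^ 2 := by
  have he_inj : e.Injective := fun i j hij => by
    by_contra hne
    simpa [he, hne] using congrFun (congrArg A hij) i.castSucc
  set M := A.submatrix (Fin.snoc e r : Fin (n + 1) → Fin N) id
  have hlast : Mᵀ (Fin.last n) = Pi.single (Fin.last n) (A r (Fin.last n)) := by
    ext i
    induction i using Fin.lastCases <;> simp [M, he, Fin.castSucc_ne_last]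
  have hblock : Mᵀ.submatrix Fin.castSucc Fin.castSucc = 1 := by
    ext i j
    simp [M, he, one_apply, Pi.single_apply]
  rw [sqMinor_eq_sq_det A (Fin.snoc_injective_of_injective he_inj hr) (by simp),
    ← det_transpose, det_eq_mul_det_submatrix_castSucc _ hlast, hblock, det_one, mul_one]

lemma sq_le_sum_sqMinor_of_rows_eq_single (h : n + 1 ≤ N)
    (hId : ∀ i, A (Fin.castLE h i) = Pi.single i 1) {r : Fin N} (hr : n + 1 ≤ r) :
    A r (Fin.last n) ^ 2 ≤
      ∑ I ∈ Finset.univ.powersetCard (n + 1) with Fin.castLE h (Fin.last n) ∉ I,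
        sqMinor A I := by
  set e : Fin n → Fin N := fun j => Fin.castLE h j.castSucc
  have hr : r ∉ Set.range e := by
    rintro ⟨j, rfl⟩
    simp [e] at hr
    omega
  have he : e.Injective := (Fin.castLE_injective h).comp (Fin.castSucc_injective n)
  have hmem : insert r (Finset.univ.image e) ∈
      ({I ∈ Finset.univ.powersetCard (n + 1) | Fin.castLE h (Fin.last n) ∉ I} :
        Finset (Finset (Fin N))) := by
    simp only [Finset.mem_filter, Finset.mem_powersetCard_univ, Finset.mem_insert,
      Finset.mem_image, Finset.mem_univ, true_and, Fin.ext_iff, not_or, not_exists]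
    refine ⟨?_, by simp; omega, fun j => by simp [e]; omega⟩
    rw [Finset.card_insert_of_notMem (by simpa using hr), Finset.card_image_of_injective _ he,
      Finset.card_fin]
  rw [← sqMinor_insert_image_eq_sq (fun j => hId j.castSucc) hr]
  exact Finset.single_le_sum (fun I _ => sqMinor_nonneg A I) hmem

end LastColumn

end Matrix

/-- Let `A` be the `N × L` real matrix whose first `L` rows form the
identity block (first `L - 1` rows `(1_{L-1} | 0)`, `L`-th row `(0, …, 0, 1)`) and whose
remaining rows are `(U | V)`, and let `A'` be the `N × (L-1)` matrix of the first
`L - 1` columns of `A` (so its first `L - 1` rows are `1_{L-1}`, its `L`-th row is `0`,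
and its remaining rows are `U`).  Then the sum of the squares of all `(L-1) × (L-1)`
minors of `A'` is at most the sum of the squares of all `L × L` minors of `A`, with
equality if and only if `V = 0`. -/
theorem stmt5 {N L : ℕ} (hL : 2 ≤ L) (hNL : L < N)
    (U : ℕ → ℕ → ℝ) (V : ℕ → ℝ)
    (A : Matrix (Fin N) (Fin L) ℝ)
    (hA : ∀ (i : Fin N) (j : Fin L), A i j =
      if (i : ℕ) < L then (if (i : ℕ) = (j : ℕ) then 1 else 0)
      else (if (j : ℕ) < L - 1 then U ((i : ℕ) - L) (j : ℕ) else V ((i : ℕ) - L)))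
    (A' : Matrix (Fin N) (Fin (L - 1)) ℝ)
    (hA' : ∀ (i : Fin N) (j : Fin (L - 1)), A' i j = A i (Fin.castLE (by omega) j)) :
    minorSum A' ≤ minorSum A ∧
      (minorSum A' = minorSum A ↔ ∀ m < N - L, V m = 0) := by
  obtain ⟨n, rfl⟩ : ∃ n, L = n + 1 := ⟨L - 1, by omega⟩
  have hA'_eq : A' = A.submatrix id Fin.castSucc := by ext i j; exact hA' i j
  have hId : ∀ i : Fin (n + 1), A (Fin.castLE hNL.le i) = Pi.single i 1 := by
    intro i; ext j
    rw [hA, Fin.val_castLE, if_pos i.isLt]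
    simp [Pi.single_apply, Fin.ext_iff, eq_comm]
  have hAV : ∀ i : Fin N, n + 1 ≤ i → A i (Fin.last n) = V (i - (n + 1)) := by
    intro i hi
    rw [hA, if_neg (by omega), if_neg (by simp)]
  set k := Fin.castLE hNL.le (Fin.last n)
  rw [hA'_eq, minorSum_eq_add_of_row_eq_single (hId (Fin.last n))]
  set R := ∑ I ∈ Finset.univ.powersetCard (n + 1) with k ∉ I, sqMinor A I
  have hR : 0 ≤ R := Finset.sum_nonneg fun I _ => sqMinor_nonneg A I
  suffices R = 0 ↔ ∀ m < N - (n + 1), V m = 0 by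
    exact ⟨by linarith, by rw [← this]; constructor <;> intro h <;> linarith⟩
  constructor
  · intro hR0 m hm
    have hVm : A ⟨n + 1 + m, by omega⟩ (Fin.last n) ^ 2 ≤ R :=
      sq_le_sum_sqMinor_of_rows_eq_single hNL.le hId (by simp)
    rw [hAV _ (by simp), hR0] at hVm
    simpa using hVm
  · intro hV0
    refine sum_sqMinor_not_mem_eq_zero_of_col_eq_zero fun i hik => ?_
    by_cases hi : (i : ℕ) < n + 1
    · have hik' : (⟨i, hi⟩ : Fin (n + 1)) ≠ Fin.last n := fun h => hik (by simp [k, ← h])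
      simpa [hik'] using congrFun (hId ⟨i, hi⟩) (Fin.last n)
    · rw [hAV i (by omega)]
      exact hV0 _ (by omega)
end

section
/- Let X be an N × L real matrix of rank L such that the submatrix X_J on some L-element row set J is a permutation matrix, and for 1 ≤ i ≤ L let X' be X with the i-th column deleted. Then the sum of the squares of all (L−1) × (L−1) minors of X' is at most the sum of the squares of all L × L minors of X, with equality if and only if the i-th column of X is a standard basis vector of ℝ^N. -/
open Matrix

/-! Let `r` be the row of `X_J` equal to the `i`-th unit vector. Expanding along row `r`, an
`L × L` minor of `X` on a row set containing `r` is, up to sign, the minor of `X'` on the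
remaining rows, while the minors of `X'` using row `r` vanish since that row of `X'` is zero.
Hence `minorSum X = minorSum X' + T`, where `T ≥ 0` collects the minors of `X` on row sets
avoiding `r`. If column `i` is `e_r` then every such minor has a zero column, so `T = 0`.
Conversely, replacing `r` in `J` by any other row `q` outside `J` gives a minor equal to
`± X q i`, so `T = 0` forces column `i` to vanish off `r`. -/

theorem det_updateRow_one {R n : Type*} [CommRing R] [Fintype n] [DecidableEq n]
    (j : n) (v : n → R) : (updateRow (1 : Matrix n n R) j v).det = v j := by
  have hv : v = ∑ k, v k • (1 : Matrix n n R) k := by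
    ext b; simp [one_apply]
  rw [hv, det_updateRow_sum, det_one, smul_eq_mul, mul_one, ← hv]

theorem det_sq_submatrix_perm {R n : Type*} [CommRing R] [Fintype n] [DecidableEq n]
    (M : Matrix n n R) (σ : Equiv.Perm n) : (M.submatrix σ id).det ^ 2 = M.det ^ 2 := by
  rw [det_permute, mul_pow, ← Int.cast_pow, ← Units.val_pow_eq_pow_val, Int.units_sq]
  simp

theorem det_sq_eq_of_row_zero_eq_single {R : Type*} [CommRing R] {m : ℕ}
    (M : Matrix (Fin (m + 1)) (Fin (m + 1)) R) (i : Fin (m + 1))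
    (h : ∀ b, M 0 b = if b = i then 1 else 0) :
    M.det ^ 2 = (M.submatrix Fin.succ i.succAbove).det ^ 2 := by
  rw [det_succ_row_zero, Finset.sum_eq_single i (fun b _ hb => by simp [h, hb]) (by simp),
    h, if_pos rfl, mul_one, mul_pow, ← pow_mul, mul_comm i.val, pow_mul]
  simp

theorem det_sq_submatrix_update_eq_sq {R : Type*} [CommRing R] {N k : ℕ}
    {A : Matrix (Fin N) (Fin k) R} {g : Fin k → Fin N} {σ : Equiv.Perm (Fin k)}
    (hperm : ∀ a b, A (g a) b = if σ a = b then 1 else 0) (j : Fin k) (q : Fin N) :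
    (A.submatrix (Function.update g (σ.symm j) q) id).det ^ 2 = A q j ^ 2 := by
  have hrows : A.submatrix (Function.update g (σ.symm j) q) id
      = (updateRow (1 : Matrix (Fin k) (Fin k) R) j (A q)).submatrix σ id := by
    ext a b
    rcases eq_or_ne a (σ.symm j) with rfl | ha
    · simp
    · have hσa : σ a ≠ j := fun h => ha (σ.eq_symm_apply.mpr h)
      simp [Function.update_of_ne ha, hperm, updateRow_ne hσa, one_apply]
  rw [hrows, det_sq_submatrix_perm, det_updateRow_one]

section minorSq

variable {R : Type*} [CommRing R] {N k : ℕ}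

noncomputable def minorSq (A : Matrix (Fin N) (Fin k) R) (I : Finset (Fin N)) : R :=
  if h : I.card = k then (A.submatrix (I.orderEmbOfFin h) id).det ^ 2 else 0

theorem minorSq_image (A : Matrix (Fin N) (Fin k) R) {ρ : Fin k → Fin N}
    (hρ : Function.Injective ρ) :
    minorSq A (Finset.univ.image ρ) = (A.submatrix ρ id).det ^ 2 := by
  have hcard : (Finset.univ.image ρ).card = k := by
    rw [Finset.card_image_of_injective _ hρ, Finset.card_fin]
  have hsort : ρ ∘ Tuple.sort ρ = (Finset.univ.image ρ).orderEmbOfFin hcard :=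
    Finset.orderEmbOfFin_unique hcard (fun a => by simp)
      ((Tuple.monotone_sort ρ).strictMono_of_injective (hρ.comp (Tuple.sort ρ).injective))
  rw [minorSq, dif_pos hcard, ← hsort,
    ← det_sq_submatrix_perm (A.submatrix ρ id) (Tuple.sort ρ)]
  rfl

theorem minorSq_eq_zero_of_row {A : Matrix (Fin N) (Fin k) R} {r : Fin N}
    (hr : ∀ b, A r b = 0) {I : Finset (Fin N)} (hrI : r ∈ I) : minorSq A I = 0 := by
  unfold minorSq
  split_ifs with h
  · obtain ⟨a, ha⟩ : r ∈ Set.range (I.orderEmbOfFin h) := by simpa using hrI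
    rw [det_eq_zero_of_row_eq_zero a (fun b => by simp [ha, hr]), zero_pow two_ne_zero]
  · rfl

theorem minorSq_eq_zero_of_col {A : Matrix (Fin N) (Fin k) R} {j : Fin k}
    {I : Finset (Fin N)} (hj : ∀ n ∈ I, A n j = 0) : minorSq A I = 0 := by
  unfold minorSq
  split_ifs with h
  · rw [det_eq_zero_of_column_eq_zero (A := A.submatrix (I.orderEmbOfFin h) id) j
      fun a => hj _ (I.orderEmbOfFin_mem h a), zero_pow two_ne_zero]
  · rfl

end minorSq

section deleteCol

variable {R : Type*} [CommRing R] {N m : ℕ} {A : Matrix (Fin N) (Fin (m + 1)) R}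
  {r : Fin N} {i : Fin (m + 1)}

theorem minorSq_insert_eq_minorSq_submatrix_succAbove
    (hr : ∀ b, A r b = if b = i then 1 else 0) {K : Finset (Fin N)} (hK : K.card = m)
    (hrK : r ∉ K) :
    minorSq A (insert r K) = minorSq (A.submatrix id i.succAbove) K := by
  have hρ : Function.Injective (Fin.cons r (K.orderEmbOfFin hK) : Fin (m + 1) → Fin N) :=
    Fin.cons_injective_iff.mpr ⟨by simpa using hrK, (K.orderEmbOfFin hK).injective⟩
  have himage : Finset.univ.image (Fin.cons r (K.orderEmbOfFin hK) : Fin (m + 1) → Fin N)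
      = insert r K := by
    ext n
    rw [Finset.mem_insert, ← Finset.mem_coe (s := K), ← K.range_orderEmbOfFin hK]
    simp only [Finset.mem_image, Finset.mem_univ, true_and, Fin.exists_fin_succ, Fin.cons_zero,
      Fin.cons_succ, Set.mem_range, eq_comm]
  rw [← himage, minorSq_image A hρ, minorSq, dif_pos hK,
    det_sq_eq_of_row_zero_eq_single _ i (by simpa using hr)]
  rfl

theorem sum_minorSq_submatrix_succAbove (hr : ∀ b, A r b = if b = i then 1 else 0) :
    ∑ K ∈ Finset.univ.powersetCard m, minorSq (A.submatrix id i.succAbove) K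
      = ∑ I ∈ (Finset.univ.powersetCard (m + 1)).filter (r ∈ ·), minorSq A I := by
  have hr' : ∀ b, A.submatrix id i.succAbove r b = 0 := fun b => by
    simp [hr, Fin.succAbove_ne]
  rw [← Finset.sum_filter_of_ne (p := (r ∉ ·))
    fun K _ hK hrK => hK (minorSq_eq_zero_of_row hr' hrK)]
  refine Finset.sum_nbij' (insert r) (Finset.erase · r) ?_ ?_ ?_ ?_ ?_
  · intro K hK
    simp_all [Finset.card_insert_of_notMem]
  · intro I hI
    simp_all [Finset.card_erase_of_mem]
  · intro K hK
    exact Finset.erase_insert (Finset.mem_filter.mp hK).2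
  · intro I hI
    exact Finset.insert_erase (Finset.mem_filter.mp hI).2
  · intro K hK
    simp only [Finset.mem_filter, Finset.mem_powersetCard] at hK
    exact (minorSq_insert_eq_minorSq_submatrix_succAbove hr hK.1.2 hK.2).symm

end deleteCol

theorem minorSum_eq_sum_minorSq {N k : ℕ} (A : Matrix (Fin N) (Fin k) ℝ) :
    minorSum A = ∑ I ∈ Finset.univ.powersetCard k, minorSq A I := by
  rw [minorSum, ← Finset.sum_attach _ (minorSq A)]
  refine Finset.sum_congr rfl fun I _ => ?_
  rw [minorSq, dif_pos (Finset.mem_powersetCard.mp I.2).2]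
  rfl

theorem minorSq_nonneg {N k : ℕ} (A : Matrix (Fin N) (Fin k) ℝ) (I : Finset (Fin N)) :
    0 ≤ minorSq A I := by
  unfold minorSq
  split_ifs
  exacts [sq_nonneg _, le_rfl]

theorem minorSum_eq_minorSum_submatrix_succAbove_add {N m : ℕ}
    {A : Matrix (Fin N) (Fin (m + 1)) ℝ} {r : Fin N} {i : Fin (m + 1)}
    (hr : ∀ b, A r b = if b = i then 1 else 0) :
    minorSum A = minorSum (A.submatrix id i.succAbove)
      + ∑ I ∈ (Finset.univ.powersetCard (m + 1)).filter (r ∉ ·), minorSq A I := by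
  rw [minorSum_eq_sum_minorSq, minorSum_eq_sum_minorSq, sum_minorSq_submatrix_succAbove hr,
    Finset.sum_filter_add_sum_filter_not]

theorem col_eq_single_of_sum_minorSq_eq_zero {N k : ℕ} {A : Matrix (Fin N) (Fin k) ℝ}
    {g : Fin k → Fin N} (hg : Function.Injective g) {σ : Equiv.Perm (Fin k)}
    (hperm : ∀ a b, A (g a) b = if σ a = b then 1 else 0) (j : Fin k)
    (h0 : ∑ I ∈ (Finset.univ.powersetCard k).filter (g (σ.symm j) ∉ ·), minorSq A I = 0)
    (q : Fin N) : A q j = if q = g (σ.symm j) then 1 else 0 := by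
  split_ifs with hq
  · simp [hq, hperm]
  by_cases hqg : q ∈ Set.range g
  · obtain ⟨a, rfl⟩ := hqg
    rw [hperm, if_neg]
    rintro rfl
    exact hq (by rw [σ.symm_apply_apply])
  set ρ := Function.update g (σ.symm j) q
  have hρ : Function.Injective ρ := by
    intro a b hab
    simp only [ρ, Function.update_apply] at hab
    split_ifs at hab with ha hb hb
    · exact ha.trans hb.symm
    · exact absurd ⟨b, hab.symm⟩ hqg
    · exact absurd ⟨a, hab⟩ hqg
    · exact hg hab
  have hmem :
      Finset.univ.image ρ ∈ (Finset.univ.powersetCard k).filter (g (σ.symm j) ∉ ·) := by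
    simp only [Finset.mem_filter, Finset.mem_powersetCard, Finset.subset_univ, true_and,
      Finset.card_image_of_injective _ hρ, Finset.card_fin, Finset.mem_image, Finset.mem_univ,
      not_exists, ρ, Function.update_apply]
    intro a
    split_ifs with ha
    · exact hq
    · exact fun h => ha (hg h)
  have hzero := (Finset.sum_eq_zero_iff_of_nonneg fun I _ => minorSq_nonneg A I).mp h0 _ hmem
  rw [minorSq_image A hρ, det_sq_submatrix_update_eq_sq hperm] at hzero
  exact pow_eq_zero_iff two_ne_zero |>.mp hzero

/-- Let `X` be an `N × L` real matrix of rank `L` such that its submatrix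
on some `L`-element row set `J` (given by an injective `g : Fin L → Fin N`) is a
permutation matrix, and for `i : Fin L` let `X'` be `X` with the `i`-th column deleted.
Then the sum of the squares of all `(L-1) × (L-1)` minors of `X'` is at most the sum of
the squares of all `L × L` minors of `X`, with equality if and only if the `i`-th column
of `X` is a standard basis vector of `ℝ^N`. -/
theorem stmt6 {N L : ℕ}
    (X : Matrix (Fin N) (Fin L) ℝ)
    (g : Fin L → Fin N) (hg : Function.Injective g)
    (σ : Equiv.Perm (Fin L))
    (hperm : ∀ a b : Fin L, X (g a) b = if σ a = b then 1 else 0)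
    (i : Fin L)
    (X' : Matrix (Fin N) (Fin (L - 1)) ℝ)
    (hX' : ∀ (a : Fin N) (b : Fin (L - 1)), X' a b =
      X a (if (b : ℕ) < (i : ℕ) then (⟨(b : ℕ), by omega⟩ : Fin L)
           else (⟨(b : ℕ) + 1, by omega⟩ : Fin L))) :
    minorSum X' ≤ minorSum X ∧
      (minorSum X' = minorSum X ↔
        ∃ n : Fin N, ∀ m : Fin N, X m i = if m = n then 1 else 0) := by
  obtain ⟨m, rfl⟩ := Nat.exists_eq_add_one_of_ne_zero i.pos.ne'
  obtain rfl : X' = X.submatrix id i.succAbove := by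
    ext a b
    rw [hX']
    rfl
  clear hX'
  have hr : ∀ b, X (g (σ.symm i)) b = if b = i then 1 else 0 := by simp [hperm, eq_comm]
  rw [minorSum_eq_minorSum_submatrix_succAbove_add hr, le_add_iff_nonneg_right, left_eq_add]
  refine ⟨Finset.sum_nonneg fun I _ => minorSq_nonneg X I, ?_⟩
  constructor
  · exact fun h0 => ⟨_, col_eq_single_of_sum_minorSq_eq_zero hg hperm i h0⟩
  · rintro ⟨n, hn⟩
    obtain rfl : g (σ.symm i) = n := by simpa [hr] using hn (g (σ.symm i))
    refine Finset.sum_eq_zero fun I hI => minorSq_eq_zero_of_col (j := i) fun q hq => ?_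
    rw [hn, if_neg]
    rintro rfl
    exact (Finset.mem_filter.mp hI).2 hq
end

section
/- Let A be an N × L real matrix of rank L with an L-row submatrix equal to the identity (rows indexed by J = set with A_J = 1_L), and for a subset I ⊆ {1,…,L} let A^I be the submatrix of A on the columns indexed by I. Then for I₁ ⊊ I₂ ⊆ {1,…,L}, the sum of squares of the |I₁| × |I₁| minors of A^{I₁} is at most the sum of squares of the |I₂| × |I₂| minors of A^{I₂}. -/
/-! If row `r` of `A` is the unit vector `e_j` with `j ∉ I`, every minor of `A^I` whose row
set contains `r` vanishes, while the minor on a row set `K ∌ r` equals, up to sign, the minor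
of `A^{I ∪ {j}}` on `K ∪ {r}` (Laplace expansion along row `r`). So `K ↦ K ∪ {r}` injects the
squared minors of `A^I` into those of `A^{I ∪ {j}}`, and the columns of `I₂ \ I₁` are added
one at a time. -/

open Matrix

/-- For an `N × L` real matrix `A` and a set `I` of column indices, the sum of the
squares of all maximal (`|I| × |I|`) minors of the column submatrix `A^I` of `A`
(columns indexed by `I`, rows running over all `|I|`-element row sets, both enumerated
in increasing order). -/
noncomputable def colMinorSum {N L : ℕ} (A : Matrix (Fin N) (Fin L) ℝ)
    (I : Finset (Fin L)) : ℝ :=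
  ∑ J ∈ (Finset.univ.powersetCard I.card : Finset (Finset (Fin N))).attach,
    (Matrix.det (fun a b : Fin I.card =>
      A (J.1.orderIsoOfFin (Finset.mem_powersetCard.mp J.2).2 a)
        (I.orderIsoOfFin rfl b))) ^ 2

namespace Finset

variable {α : Type*} [LinearOrder α]

lemma orderEmbOfFin_insert_comp_succAbove {s : Finset α} {a : α} {k : ℕ}
    (hs : s.card = k) (hs' : (insert a s).card = k + 1) {p : Fin (k + 1)}
    (hp : (insert a s).orderEmbOfFin hs' p = a) :
    (insert a s).orderEmbOfFin hs' ∘ p.succAbove = s.orderEmbOfFin hs := by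
  refine orderEmbOfFin_unique hs (fun i => ?_)
    ((orderEmbOfFin _ hs').strictMono.comp (Fin.strictMono_succAbove p))
  have hne : (insert a s).orderEmbOfFin hs' (p.succAbove i) ≠ a := fun h =>
    Fin.succAbove_ne p i ((orderEmbOfFin _ hs').injective (h.trans hp.symm))
  exact (mem_insert.mp (orderEmbOfFin_mem _ hs' _)).resolve_left hne

end Finset

namespace Matrix

variable {R : Type*} [CommRing R]

lemma det_eq_neg_one_pow_mul_det_submatrix_of_row_eq_single {n : ℕ}
    (M : Matrix (Fin (n + 1)) (Fin (n + 1)) R) {r c : Fin (n + 1)} (hr : M r = Pi.single c 1) :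
    M.det = (-1) ^ (r + c : ℕ) * (M.submatrix r.succAbove c.succAbove).det := by
  rw [← adjugate_fin_succ_eq_det_submatrix, adjugate_apply, ← hr, updateRow_eq_self]

variable {α β : Type*} [LinearOrder α] [LinearOrder β]

/-- Takes the junk value `0` when `#K ≠ #I`. -/
noncomputable def minor (A : Matrix α β R) (K : Finset α) (I : Finset β) : R :=
  if h : K.card = I.card then
    det fun a b => A (K.orderEmbOfFin h a) (I.orderEmbOfFin rfl b)
  else 0

lemma minor_eq_det (A : Matrix α β R) {K : Finset α} {I : Finset β} {k : ℕ}
    (hK : K.card = k) (hI : I.card = k) :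
    A.minor K I = det fun a b => A (K.orderEmbOfFin hK a) (I.orderEmbOfFin hI b) := by
  subst hI
  rw [minor, dif_pos hK]

lemma minor_eq_zero_of_mem_of_row_eq_zero (A : Matrix α β R) {K : Finset α} {I : Finset β}
    {r : α} (hr : r ∈ K) (hzero : ∀ i ∈ I, A r i = 0) : A.minor K I = 0 := by
  rw [minor]
  split_ifs with h
  · obtain ⟨a, ha⟩ : r ∈ Set.range (K.orderEmbOfFin h) := by
      rwa [Finset.range_orderEmbOfFin]
    exact det_eq_zero_of_row_eq_zero a fun b => ha ▸ hzero _ (I.orderEmbOfFin_mem rfl b)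
  · rfl

lemma minor_insert_insert_sq (A : Matrix α β R) {K : Finset α} {I : Finset β}
    {r : α} {j : β} (hrK : r ∉ K) (hjI : j ∉ I) (hr : A r = Pi.single j 1) :
    A.minor (insert r K) (insert j I) ^ 2 = A.minor K I ^ 2 := by
  by_cases hKI : K.card = I.card
  · set k := I.card
    have hK' : (insert r K).card = k + 1 := by rw [Finset.card_insert_of_notMem hrK, hKI]
    have hI' : (insert j I).card = k + 1 := Finset.card_insert_of_notMem hjI
    set u := (insert r K).orderEmbOfFin hK'
    set f := (insert j I).orderEmbOfFin hI'
    obtain ⟨p, hp⟩ : r ∈ Set.range u := by simp [u, Finset.range_orderEmbOfFin]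
    obtain ⟨q, hq⟩ : j ∈ Set.range f := by simp [f, Finset.range_orderEmbOfFin]
    set M : Matrix (Fin (k + 1)) (Fin (k + 1)) R := fun a b => A (u a) (f b)
    have hrow : M p = Pi.single q 1 := by
      ext b
      simp only [M, hp, hr, Pi.single_apply, ← hq, f.injective.eq_iff]
    rw [minor_eq_det A hK' hI', minor_eq_det A hKI rfl]
    change M.det ^ 2 = _
    rw [det_eq_neg_one_pow_mul_det_submatrix_of_row_eq_single M hrow, mul_pow, ← pow_mul,
      pow_mul', neg_one_sq, one_pow, one_mul]
    congr 3
    ext a b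
    change A (u (p.succAbove a)) (f (q.succAbove b)) = _
    rw [← congrFun (Finset.orderEmbOfFin_insert_comp_succAbove hKI hK' hp) a,
      ← congrFun (Finset.orderEmbOfFin_insert_comp_succAbove rfl hI' hq) b]
    rfl
  · have hKI' : (insert r K).card ≠ (insert j I).card := by
      rwa [Finset.card_insert_of_notMem hrK, Finset.card_insert_of_notMem hjI, Ne,
        Nat.succ_inj]
    rw [minor, minor, dif_neg hKI, dif_neg hKI']

end Matrix

lemma colMinorSum_eq_sum_minor_sq {N L : ℕ} (A : Matrix (Fin N) (Fin L) ℝ)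
    (I : Finset (Fin L)) :
    colMinorSum A I = ∑ K ∈ Finset.univ.powersetCard I.card, A.minor K I ^ 2 := by
  rw [colMinorSum, ← Finset.sum_attach _ fun K => A.minor K I ^ 2]
  refine Finset.sum_congr rfl fun K _ => ?_
  rw [A.minor_eq_det (Finset.mem_powersetCard.mp K.2).2 rfl]
  simp [Finset.coe_orderIsoOfFin_apply]

lemma colMinorSum_le_insert {N L : ℕ} (A : Matrix (Fin N) (Fin L) ℝ) {I : Finset (Fin L)}
    {r : Fin N} {j : Fin L} (hr : A r = Pi.single j 1) (hjI : j ∉ I) :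
    colMinorSum A I ≤ colMinorSum A (insert j I) := by
  set S := (Finset.univ.powersetCard I.card).filter (r ∉ ·)
  have hzero (K : Finset (Fin N)) (hrK : r ∈ K) : A.minor K I = 0 :=
    A.minor_eq_zero_of_mem_of_row_eq_zero hrK fun i hi => by
      rw [hr, Pi.single_eq_of_ne (ne_of_mem_of_not_mem hi hjI)]
  have hinj : Set.InjOn (insert r) (S : Set (Finset (Fin N))) := fun K hK K' hK' h => by
    rw [← Finset.erase_insert (Finset.mem_filter.mp hK).2,
      ← Finset.erase_insert (Finset.mem_filter.mp hK').2, h]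
  have hsub : S.image (insert r) ⊆ Finset.univ.powersetCard (insert j I).card := by
    intro K hK
    obtain ⟨K, hKS, rfl⟩ := Finset.mem_image.mp hK
    obtain ⟨hK, hrK⟩ := Finset.mem_filter.mp hKS
    rw [Finset.mem_powersetCard_univ] at hK ⊢
    rw [Finset.card_insert_of_notMem hrK, Finset.card_insert_of_notMem hjI, hK]
  calc colMinorSum A I = ∑ K ∈ S, A.minor K I ^ 2 := by
        rw [colMinorSum_eq_sum_minor_sq, Finset.sum_filter_of_ne]
        intro K _ hK hrK
        simp [hzero K hrK] at hK
    _ = ∑ K ∈ S, A.minor (insert r K) (insert j I) ^ 2 :=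
        Finset.sum_congr rfl fun K hK =>
          (A.minor_insert_insert_sq (Finset.mem_filter.mp hK).2 hjI hr).symm
    _ = ∑ K ∈ S.image (insert r), A.minor K (insert j I) ^ 2 :=
        (Finset.sum_image (f := fun K => A.minor K (insert j I) ^ 2) hinj).symm
    _ ≤ colMinorSum A (insert j I) := by
        rw [colMinorSum_eq_sum_minor_sq]
        exact Finset.sum_le_sum_of_subset_of_nonneg hsub fun _ _ _ => sq_nonneg _

lemma colMinorSum_monotone {N L : ℕ} (A : Matrix (Fin N) (Fin L) ℝ)
    (hA : ∀ j, ∃ r, A r = Pi.single j 1) : Monotone (colMinorSum A) :=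
  Finset.monotone_iff_forall_le_insert.mpr fun _ j hj =>
    (hA j).elim fun _ hr => colMinorSum_le_insert A hr hj

theorem stmt8_general {N L : ℕ}
    (A : Matrix (Fin N) (Fin L) ℝ)
    (g : Fin L → Fin N)
    (hid : A.submatrix g id = (1 : Matrix (Fin L) (Fin L) ℝ))
    (I₁ I₂ : Finset (Fin L)) (h12 : I₁ ⊂ I₂) :
    colMinorSum A I₁ ≤ colMinorSum A I₂ := by
  refine colMinorSum_monotone A (fun j => ⟨g j, funext fun i => ?_⟩) h12.subset
  simpa [Matrix.one_eq_pi_single] using congrFun (congrFun hid j) i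

/-- Let `A` be an `N × L` real matrix of rank `L` containing the `L × L`
identity matrix as the submatrix on the rows indexed by an injective `g : Fin L → Fin N`
(the row set `J` with `A_J = 1_L`).  For `I₁ ⊊ I₂ ⊆ {1, …, L}`, the sum of the squares
of the `|I₁| × |I₁|` minors of the column submatrix `A^{I₁}` is at most the sum of the
squares of the `|I₂| × |I₂|` minors of `A^{I₂}`. -/
theorem stmt8 {N L : ℕ} (hL : 1 ≤ L) (hNL : L < N)
    (A : Matrix (Fin N) (Fin L) ℝ) (hrank : A.rank = L)
    (g : Fin L → Fin N) (hg : Function.Injective g)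
    (hid : A.submatrix g id = (1 : Matrix (Fin L) (Fin L) ℝ))
    (I₁ I₂ : Finset (Fin L)) (h12 : I₁ ⊂ I₂) :
    colMinorSum A I₁ ≤ colMinorSum A I₂ :=
  stmt8_general A g hid I₁ I₂ h12
end

section
/- Let X = (Y Z) be an N × L real matrix of rank L partitioned into an N × J block Y and an N × (L−J) block Z with 1 ≤ J < L. Then the Euclidean norm of the vector of L × L minors of X is at most the product of the Euclidean norm of the vector of J × J minors of Y and the Euclidean norm of the vector of (L−J) × (L−J) minors of Z (generalized Hadamard inequality for compound matrices). -/
/-!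
The sum of the squared maximal minors of `A` is `‖a₁ ∧ ⋯ ∧ a_L‖²` for the columns `aⱼ` of `A`,
read off in the orthonormal basis of `⋀^L ℝ^N` coming from the standard basis; since the inner
product on `⋀^L ℝ^N` is the Gram determinant, this is `det (Aᵀ A)` (Cauchy–Binet).

For `X = (Y Z)` the Gram matrix `Xᵀ X` is a positive semidefinite block matrix with diagonal
blocks `Yᵀ Y` and `Zᵀ Z`, so the claim is Fischer's inequality
`det [[A, B], [Bᵀ, D]] ≤ det A * det D`. When `A` is positive definite the Schur complement gives
`det = det A * det (D - Bᵀ A⁻¹ B)` with `0 ≤ D - Bᵀ A⁻¹ B ≤ D`, and the determinant is monotone on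
positive semidefinite matrices.
-/

open Matrix RealInnerProductSpace
open scoped Pointwise

theorem exteriorPower.norm_ιMulti_sq_eq_sum_sq_det {E : Type*} [NormedAddCommGroup E]
    [InnerProductSpace ℝ E] [FiniteDimensional ℝ E] {I : Type*} [Fintype I] [LinearOrder I]
    (b : OrthonormalBasis I ℝ E) {n : ℕ} (v : Fin n → E) :
    ‖ιMulti ℝ n v‖ ^ 2 =
      ∑ s : Set.powersetCard I n,
        det (of fun i j ↦ ⟪b (Set.powersetCard.ofFinEmbEquiv.symm s i), v j⟫) ^ 2 := by
  rw [← (b.exteriorPower n).repr.norm_map, EuclideanSpace.norm_sq_eq]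
  refine Fintype.sum_congr _ _ fun s ↦ ?_
  rw [Real.norm_eq_abs, sq_abs, ← det_transpose, ← OrthonormalBasis.coe_toBasis_repr_apply,
    OrthonormalBasis.toBasis_exteriorPower, basis_repr_apply, ιMultiDual_apply_ιMulti]
  congr 2
  ext i j
  simp [b.repr_apply_apply]

theorem minorSum_eq_det_transpose_mul_self {N L : ℕ} (A : Matrix (Fin N) (Fin L) ℝ) :
    minorSum A = det (Aᵀ * A) := by
  let cols : Fin L → EuclideanSpace ℝ (Fin N) := fun j ↦ WithLp.toLp 2 (Aᵀ j)
  have hgram : gram ℝ cols = Aᵀ * A := by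
    ext i j
    simp [cols, gram_apply, mul_apply, EuclideanSpace.inner_eq_star_dotProduct, dotProduct,
      mul_comm]
  rw [← hgram, ← exteriorPower.inner_ιMulti_self, real_inner_self_eq_norm_sq,
    exteriorPower.norm_ιMulti_sq_eq_sum_sq_det (EuclideanSpace.basisFun (Fin N) ℝ), minorSum]
  refine Finset.sum_equiv (Equiv.subtypeEquivRight fun s ↦ ?_) (by simp) fun I _ ↦ ?_
  · simp [Set.powersetCard.mem_iff]
  · congr 2
    ext i j
    simp [cols, EuclideanSpace.inner_single_left, Set.powersetCard.ofFinEmbEquiv_symm_apply]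

namespace Matrix.PosSemidef

variable {m n : Type*} [Fintype m] [Fintype n] [DecidableEq m] [DecidableEq n]

theorem det_le_one {M : Matrix n n ℝ} (hM : M.PosSemidef) (h : (1 - M).PosSemidef) :
    M.det ≤ 1 := by
  rw [hM.1.det_eq_prod_eigenvalues]
  refine Finset.prod_le_one (fun i _ ↦ by simpa using hM.eigenvalues_nonneg i) fun i _ ↦ ?_
  have hspec : spectrum ℝ (1 - M) = ({1} : Set ℝ) - spectrum ℝ M := by
    rw [spectrum.singleton_sub_eq, map_one]
  have hmem : 1 - hM.1.eigenvalues i ∈ spectrum ℝ (1 - M) :=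
    hspec ▸ Set.sub_mem_sub rfl (hM.1.eigenvalues_mem_spectrum_real i)
  have := (posSemidef_iff_isHermitian_and_spectrum_nonneg.mp h).2 hmem
  simp only [Set.mem_ofPred_eq, sub_nonneg] at this
  exact_mod_cast this

open scoped MatrixOrder in
theorem det_le_det {P R : Matrix n n ℝ} (hP : P.PosSemidef) (hRP : (R - P).PosSemidef) :
    P.det ≤ R.det := by
  have hR : R.PosSemidef := by simpa using hP.add hRP
  by_cases hPd : P.PosDef
  swap
  · rw [not_not.mp (hP.posDef_iff_det_ne_zero.not.mp hPd)]
    exact hR.det_nonneg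
  obtain ⟨B, rfl⟩ := CStarAlgebra.nonneg_iff_eq_star_mul_self.mp hR.nonneg
  have hB : IsUnit B.det := by
    have := (hPd.add_posSemidef hRP).det_pos.ne'
    rw [add_sub_cancel, det_mul] at this
    exact (right_ne_zero_of_mul this).isUnit
  obtain ⟨M, hPM⟩ : ∃ M, P = star B * M * B := ⟨star B⁻¹ * P * B⁻¹, by
    rw [← mul_assoc, ← mul_assoc, ← star_mul, nonsing_inv_mul _ hB, star_one, one_mul,
      nonsing_inv_mul_cancel_right _ _ hB]⟩
  have hBu : IsUnit B := (isUnit_iff_isUnit_det B).mpr hB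
  have hM : M.PosSemidef := hBu.posSemidef_star_left_conjugate_iff.mp (hPM ▸ hP)
  have h1M : (1 - M).PosSemidef := by
    refine hBu.posSemidef_star_left_conjugate_iff.mp ?_
    rwa [mul_sub, sub_mul, mul_one, ← hPM]
  calc P.det = det (star B * B) * M.det := by rw [hPM, det_mul, det_mul, det_mul]; ring
    _ ≤ det (star B * B) := mul_le_of_le_one_right hR.det_nonneg (hM.det_le_one h1M)

theorem det_fromBlocks_le {A : Matrix m m ℝ} {B : Matrix m n ℝ} {D : Matrix n n ℝ}
    (h : (fromBlocks A B Bᴴ D).PosSemidef) : (fromBlocks A B Bᴴ D).det ≤ A.det * D.det := by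
  have hA : A.PosSemidef := h.submatrix Sum.inl
  have hD : D.PosSemidef := h.submatrix Sum.inr
  by_cases hpd : (fromBlocks A B Bᴴ D).PosDef
  swap
  · rw [not_not.mp (h.posDef_iff_det_ne_zero.not.mp hpd)]
    exact mul_nonneg hA.det_nonneg hD.det_nonneg
  have hApd : A.PosDef := hpd.submatrix Sum.inl_injective
  have := hApd.isUnit.invertible
  have hSchur : (D - Bᴴ * A⁻¹ * B).PosSemidef := (PosDef.fromBlocks₁₁ B D hApd).mp h
  have hS : (D - (D - Bᴴ * A⁻¹ * B)).PosSemidef := by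
    rw [sub_sub_cancel]
    exact hApd.inv.posSemidef.conjTranspose_mul_mul_same B
  rw [det_fromBlocks₁₁, invOf_eq_nonsing_inv]
  exact mul_le_mul_of_nonneg_left (hSchur.det_le_det hS) hA.det_nonneg

end Matrix.PosSemidef

theorem Matrix.det_transpose_mul_self_fromCols_le {k m n : Type*} [Fintype k] [Fintype m]
    [Fintype n] [DecidableEq m] [DecidableEq n] (Y : Matrix k m ℝ) (Z : Matrix k n ℝ) :
    det ((fromCols Y Z)ᵀ * fromCols Y Z) ≤ det (Yᵀ * Y) * det (Zᵀ * Z) := by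
  have hZY : Zᵀ * Y = (Yᵀ * Z)ᴴ := by
    rw [conjTranspose_eq_transpose_of_trivial, transpose_mul, transpose_transpose]
  have h := posSemidef_conjTranspose_mul_self (fromCols Y Z)
  rw [conjTranspose_eq_transpose_of_trivial] at h
  rw [transpose_fromCols, fromRows_mul_fromCols, hZY] at h ⊢
  exact h.det_fromBlocks_le

theorem stmt14_general {N J J' : ℕ}
    (X : Matrix (Fin N) (Fin (J + J')) ℝ)
    (Y : Matrix (Fin N) (Fin J) ℝ) (Z : Matrix (Fin N) (Fin J') ℝ)
    (hY : ∀ (i : Fin N) (a : Fin J), X i (Fin.castAdd J' a) = Y i a)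
    (hZ : ∀ (i : Fin N) (b : Fin J'), X i (Fin.natAdd J b) = Z i b) :
    Real.sqrt (minorSum X) ≤ Real.sqrt (minorSum Y) * Real.sqrt (minorSum Z) := by
  have hX : X = (fromCols Y Z).submatrix id finSumFinEquiv.symm := by
    ext i k
    induction k using Fin.addCases <;> simp [hY, hZ]
  have hGram : det (Xᵀ * X) = det ((fromCols Y Z)ᵀ * fromCols Y Z) := by
    rw [hX, transpose_submatrix, ← submatrix_mul _ _ _ _ _ Function.bijective_id,
      det_submatrix_equiv_self]
  have hY₀ : 0 ≤ minorSum Y := Finset.sum_nonneg fun _ _ ↦ sq_nonneg _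
  rw [← Real.sqrt_mul hY₀]
  refine Real.sqrt_le_sqrt ?_
  rw [minorSum_eq_det_transpose_mul_self, minorSum_eq_det_transpose_mul_self,
    minorSum_eq_det_transpose_mul_self, hGram]
  exact det_transpose_mul_self_fromCols_le Y Z

/-- generalized Hadamard inequality: let `X = (Y Z)` be an `N × L` real
matrix of rank `L = J + J'` (with `1 ≤ J`, `1 ≤ J'`, so `1 ≤ J < L`), partitioned into
an `N × J` block `Y` and an `N × J'` block `Z`.  Then the Euclidean norm of the vector
of `L × L` minors of `X` is at most the product of the Euclidean norm of the vector of
`J × J` minors of `Y` and the Euclidean norm of the vector of `J' × J'` minors of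
`Z`. -/
theorem stmt14 {N J J' : ℕ} (hJ : 1 ≤ J) (hJ' : 1 ≤ J')
    (X : Matrix (Fin N) (Fin (J + J')) ℝ) (hrank : X.rank = J + J')
    (Y : Matrix (Fin N) (Fin J) ℝ) (Z : Matrix (Fin N) (Fin J') ℝ)
    (hY : ∀ (i : Fin N) (a : Fin J), X i (Fin.castAdd J' a) = Y i a)
    (hZ : ∀ (i : Fin N) (b : Fin J'), X i (Fin.natAdd J b) = Z i b) :
    Real.sqrt (minorSum X) ≤ Real.sqrt (minorSum Y) * Real.sqrt (minorSum Z) :=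
  stmt14_general X Y Z hY hZ
end
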